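/- Let (A, τ) be a unital commutative ℝ-algebra endowed with a locally multiplicatively convex topology τ, d ∈ ℕ, and M a 2d-power module of A. Then the closure of M with respect to τ equals Pos(X_M ∩ sp(τ)), i.e. cl_τ(M) = {a ∈ A : â ≥ 0 on X_M ∩ sp(τ)}. -/

import Mathlib

/-- The character space `X(A)` topologized by the weakest topology making all Gelfand
transforms continuous. -/
noncomputable instance charSpaceTopology (A : Type*) [CommRing A] [Algebra ℝ A] :
    TopologicalSpace (A →ₐ[ℝ] ℝ) :=
  TopologicalSpace.induced (fun (α : A →ₐ[ℝ] ℝ) (a : A) => α a) Pi.topologicalSpace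

/-- The locally convex topology on `A` generated by a family of seminorms. -/
noncomputable def seminormFamilyTopology {A : Type*} [CommRing A] [Algebra ℝ A]
    {ι : Type*} [Nonempty ι] (p : ι → Seminorm ℝ A) : TopologicalSpace A :=
  (SeminormFamily.moduleFilterBasis (p : SeminormFamily ℝ A ι)).topology

/-- A `2d`-power module of `A`. -/
def IsPowerModule {A : Type*} [CommRing A] [Algebra ℝ A] (d : ℕ) (M : Set A) : Prop :=
  (1 : A) ∈ M ∧ (∀ x ∈ M, ∀ y ∈ M, x + y ∈ M) ∧ ∀ a : A, ∀ x ∈ M, a ^ (2 * d) * x ∈ M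

/-!
If `a ∉ cl_τ(M)`, Hahn–Banach gives a continuous functional `L ≥ 0` on the cone `M` with
`L a < 0`, bounded by a finite supremum `q` of the `p i`, which is again submultiplicative.
When `q v < 1`, the truncations of the binomial series of `(1 + X) ^ (1 / 2d)` show that `1 + v`
is a `q`-limit of `2d`-th powers, so `(1 + v) M ⊆ cl_q(M)`; this forces `|L x| ≤ L 1 * q x`.
The normalised `M`-positive functionals bounded by `q` therefore form a compact convex set
containing a multiple of `L`, and by Krein–Milman one of its extreme points `φ` satisfies
`φ a < 0`. For `s` with `s M ⊆ M` and `q s < 1`, both `φ (s ·)` and `φ ((1 - s) ·)` are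
`M`-positive, so extremality makes `φ (s ·)` proportional to `φ`; hence `φ` is multiplicative on
`2d`-th powers, and these span `A`. So `φ` is a `τ`-continuous character in `X_M` with `φ a < 0`.
-/

theorem PowerSeries.binomialSeries_nsmul {R A : Type*} [CommRing R] [BinomialRing R] [Ring A]
    [Algebra R A] (r : R) (n : ℕ) : binomialSeries A (n • r) = binomialSeries A r ^ n := by
  induction n with
  | zero => simp
  | succ n ih => rw [succ_nsmul, binomialSeries_add, ih, pow_succ]

theorem PowerSeries.binomialSeries_inv_natCast_pow {m : ℕ} (hm : m ≠ 0) :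
    binomialSeries ℝ ((m : ℝ)⁻¹) ^ m = 1 + X := by
  rw [← binomialSeries_nsmul, nsmul_eq_mul, mul_inv_cancel₀ (Nat.cast_ne_zero.mpr hm),
    ← Nat.cast_one, binomialSeries_nat, pow_one]

theorem Ring.choose_succ_mul {R : Type*} [CommRing R] [BinomialRing R] (r : R) (n : ℕ) :
    Ring.choose r (n + 1) * (n + 1) = Ring.choose r n * (r - n) := by
  have := Ring.choose_smul_choose r n.le_succ
  rwa [Nat.choose_succ_self_right, Nat.succ_sub (le_refl n), Nat.sub_self, Ring.choose_one_right,
    nsmul_eq_mul, Nat.cast_succ, mul_comm] at this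

theorem Ring.abs_choose_le_one {r : ℝ} (h0 : 0 ≤ r) (h1 : r ≤ 1) (n : ℕ) :
    |Ring.choose r n| ≤ 1 := by
  induction n with
  | zero => simp
  | succ n ih =>
    have hn : (0 : ℝ) < n + 1 := by positivity
    have hrn : |r - n| ≤ n + 1 := abs_le.mpr ⟨by linarith, by linarith⟩
    rw [← mul_le_mul_iff_of_pos_right hn, one_mul, ← abs_of_pos hn, ← abs_mul,
      Ring.choose_succ_mul, abs_mul, abs_of_pos hn]
    exact (mul_le_of_le_one_left (abs_nonneg _) ih).trans hrn

theorem PowerSeries.abs_coeff_trunc_binomialSeries_le {r : ℝ} (h0 : 0 ≤ r) (h1 : r ≤ 1)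
    (n k : ℕ) :
    |(trunc n (binomialSeries ℝ r)).coeff k| ≤ (trunc n (mk 1 : PowerSeries ℝ)).coeff k := by
  simp only [coeff_trunc, binomialSeries_coeff, coeff_mk]
  split_ifs
  · simpa using Ring.abs_choose_le_one h0 h1 k
  · simp

theorem PowerSeries.eval_trunc_mk_one_le {ρ : ℝ} (h0 : 0 ≤ ρ) (h1 : ρ < 1) (n : ℕ) :
    (trunc n (mk 1 : PowerSeries ℝ)).eval ρ ≤ (1 - ρ)⁻¹ := by
  rw [Polynomial.eval, eval₂_trunc_eq_sum_range]
  simpa [← Finset.range_eq_Ico] using geom_sum_Ico_le_of_lt_one (m := 0) (n := n) h0 h1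

section

open Polynomial

theorem Polynomial.abs_coeff_mul_le {P P' Q Q' : ℝ[X]} (hP : ∀ k, |P.coeff k| ≤ P'.coeff k)
    (hQ : ∀ k, |Q.coeff k| ≤ Q'.coeff k) (k : ℕ) : |(P * Q).coeff k| ≤ (P' * Q').coeff k := by
  rw [coeff_mul, coeff_mul]
  refine (Finset.abs_sum_le_sum_abs _ _).trans (Finset.sum_le_sum fun x _ => ?_)
  rw [abs_mul]
  exact mul_le_mul (hP _) (hQ _) (abs_nonneg _) ((abs_nonneg _).trans (hP _))

theorem Polynomial.abs_coeff_pow_le {P P' : ℝ[X]} (hP : ∀ k, |P.coeff k| ≤ P'.coeff k)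
    (m k : ℕ) : |(P ^ m).coeff k| ≤ (P' ^ m).coeff k := by
  induction m generalizing k with
  | zero => simp only [pow_zero, Polynomial.coeff_one]; split_ifs <;> simp
  | succ m ih => rw [pow_succ, pow_succ]; exact abs_coeff_mul_le ih hP k

section Seminorm

variable {A : Type*} [Ring A] [Algebra ℝ A] {q : Seminorm ℝ A}

theorem Seminorm.apply_pow_le (hq : ∀ a b, q (a * b) ≤ q a * q b) (u : A) {n : ℕ}
    (hn : n ≠ 0) : q (u ^ n) ≤ q u ^ n :=
  map_pow_le_pow (⟨q.toAddGroupSeminorm, hq⟩ : RingSeminorm A) u hn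

theorem Seminorm.apply_aeval_le (hq : ∀ a b, q (a * b) ≤ q a * q b) (v : A) {P B : ℝ[X]}
    {N : ℕ} (hP : ∀ j ≤ N, P.coeff j = 0) (hPB : ∀ j, |P.coeff j| ≤ B.coeff j) {ρ : ℝ}
    (hρ : 0 < ρ) (hvρ : q v ≤ ρ) : q (aeval v P) ≤ (q v / ρ) ^ (N + 1) * B.eval ρ := by
  set D := max P.natDegree B.natDegree + 1
  rw [aeval_eq_sum_range' (n := D) (by omega), eval_eq_sum_range' (n := D) (by omega),
    Finset.mul_sum]
  refine (Finset.le_sum_of_subadditive q (map_zero q).le (map_add_le_add q) _ _).trans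
    (Finset.sum_le_sum fun j _ => ?_)
  rw [map_smul_eq_mul, Real.norm_eq_abs]
  have hr : 0 ≤ q v / ρ := div_nonneg (apply_nonneg q v) hρ.le
  have hB : 0 ≤ B.coeff j := (abs_nonneg _).trans (hPB j)
  rcases le_or_gt j N with hj | hj
  · rw [hP j hj, abs_zero, zero_mul]
    positivity
  · calc |P.coeff j| * q (v ^ j) ≤ B.coeff j * (ρ ^ j * (q v / ρ) ^ j) := by
          rw [← mul_pow, mul_div_cancel₀ _ hρ.ne']
          exact mul_le_mul (hPB j) (apply_pow_le hq v (by omega)) (apply_nonneg q _) hB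
      _ ≤ B.coeff j * (ρ ^ j * (q v / ρ) ^ (N + 1)) := by
          have := pow_le_pow_of_le_one hr (div_le_one_of_le₀ hvρ hρ.le) hj
          gcongr
      _ = (q v / ρ) ^ (N + 1) * (B.coeff j * ρ ^ j) := by ring

open PowerSeries in
theorem Seminorm.exists_pow_sub_one_add_lt (hq : ∀ a b, q (a * b) ≤ q a * q b) {m : ℕ}
    (hm : m ≠ 0) {v : A} (hv : q v < 1) {ε : ℝ} (hε : 0 < ε) :
    ∃ g : A, q (g ^ m - (1 + v)) < ε := by
  obtain ⟨ρ, hvρ, hρ1⟩ := exists_between hv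
  have hρ : 0 < ρ := (apply_nonneg q v).trans_lt hvρ
  have hr : q v / ρ < 1 := (div_lt_one hρ).mpr hvρ
  have hK : 0 < (1 - ρ)⁻¹ ^ m := pow_pos (inv_pos.mpr (by linarith)) m
  obtain ⟨N, hN⟩ := exists_pow_lt_of_lt_one (div_pos hε hK) hr
  -- `g` is `T (v)` for `T` a truncation of the binomial series of `(1 + X) ^ (1 / m)`
  set T := trunc (N + 2) (binomialSeries ℝ ((m : ℝ)⁻¹))
  set G := trunc (N + 2) (PowerSeries.mk 1 : PowerSeries ℝ)
  have hTm : trunc (N + 2) ((T : ℝ⟦X⟧) ^ m) = 1 + Polynomial.X := by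
    rw [trunc_trunc_pow, binomialSeries_inv_natCast_pow hm, map_add, trunc_one, trunc_X]
  set P := T ^ m - trunc (N + 2) ((T : ℝ⟦X⟧) ^ m)
  have hP : ∀ j ≤ N + 1, P.coeff j = 0 := fun j hj => by
    rw [coeff_sub, coeff_trunc, if_pos (by omega), ← Polynomial.coe_pow, Polynomial.coeff_coe,
      sub_self]
  have hPG : ∀ j, |P.coeff j| ≤ (G ^ m).coeff j := fun j => by
    refine le_trans ?_ (abs_coeff_pow_le (abs_coeff_trunc_binomialSeries_le (by positivity)
      (inv_le_one_of_one_le₀ (Nat.one_le_cast.mpr (Nat.one_le_iff_ne_zero.mpr hm))) _) m j)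
    rw [coeff_sub, coeff_trunc, ← Polynomial.coe_pow, Polynomial.coeff_coe]
    split_ifs <;> simp [T]
  refine ⟨aeval v T, ?_⟩
  have hPv : aeval v P = aeval v T ^ m - (1 + v) := by simp [P, hTm]
  calc q (aeval v T ^ m - (1 + v)) ≤ (q v / ρ) ^ (N + 1 + 1) * (G ^ m).eval ρ :=
        hPv ▸ apply_aeval_le hq v hP hPG hρ hvρ.le
    _ ≤ (q v / ρ) ^ N * (1 - ρ)⁻¹ ^ m := by
        rw [Polynomial.eval_pow]
        have hG : 0 ≤ G.eval ρ := by
          rw [Polynomial.eval, eval₂_trunc_eq_sum_range]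
          simp only [coeff_mk, Pi.one_apply, RingHom.id_apply, one_mul]
          positivity
        exact mul_le_mul (pow_le_pow_of_le_one (by positivity) hr.le (by omega))
          (pow_le_pow_left₀ hG (eval_trunc_mk_one_le hρ.le hρ1 _) m) (by positivity)
          (by positivity)
    _ < ε := (lt_div_iff₀ hK).mp hN

end Seminorm

theorem LinearMap.eq_zero_of_forall_map_pow_eq_zero {K A : Type*} [Field K] [CharZero K]
    [CommRing A] [Algebra K A] {n : ℕ} (hn : n ≠ 0) {D : A →ₗ[K] K}
    (hD : ∀ c : A, D (c ^ n) = 0) : D = 0 := by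
  ext y
  -- `t ↦ D ((t • y + 1) ^ n)` is a polynomial in `t` whose linear coefficient is `n * D y`
  set P : K[X] := ∑ k ∈ Finset.range (n + 1), Polynomial.C (n.choose k * D (y ^ k)) * X ^ k
  have hP : P = 0 := Polynomial.funext fun t => by
    have hexp : (t • y + 1) ^ n = ∑ k ∈ Finset.range (n + 1), (t ^ k * n.choose k) • y ^ k := by
      rw [add_pow]
      refine Finset.sum_congr rfl fun k _ => ?_
      simp only [one_pow, mul_one, Algebra.smul_def, map_mul, map_pow, map_natCast]
      ring
    rw [eval_zero, ← hD (t • y + 1), hexp, map_sum, eval_finsetSum]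
    simp only [eval_mul, eval_C, eval_pow, eval_X, map_smul, smul_eq_mul]
    exact Finset.sum_congr rfl fun k _ => by ring
  have h1 := congrArg (Polynomial.coeff · 1) hP
  simp only [P, finsetSum_coeff, coeff_C_mul_X_pow, Polynomial.coeff_zero] at h1
  rw [Finset.sum_ite_eq, if_pos (by simp; omega), Nat.choose_one_right] at h1
  simpa [hn] using h1

end

theorem Seminorm.finset_sup_apply_mul_le {A ι : Type*} [Ring A] [Module ℝ A]
    {p : ι → Seminorm ℝ A} (hp : ∀ i a b, p i (a * b) ≤ p i a * p i b) (s : Finset ι) (a b : A) :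
    s.sup p (a * b) ≤ s.sup p a * s.sup p b :=
  Seminorm.finset_sup_apply_le (by positivity) fun i hi => (hp i a b).trans <|
    mul_le_mul (Seminorm.le_finset_sup_apply hi) (Seminorm.le_finset_sup_apply hi)
      (apply_nonneg _ _) (apply_nonneg _ _)

theorem LinearMap.nonneg_of_forall_exists_sub_lt {E : Type*} [AddCommGroup E] [Module ℝ E]
    {q : Seminorm ℝ E} {L : E →ₗ[ℝ] ℝ} {C : ℝ} (hLq : ∀ x, |L x| ≤ C * q x) {M : Set E}
    (hLM : ∀ m ∈ M, 0 ≤ L m) {x : E} (hx : ∀ ε > 0, ∃ m ∈ M, q (m - x) < ε) : 0 ≤ L x := by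
  by_contra! hneg
  obtain ⟨m, hm, hmx⟩ := hx (-L x / (|C| + 1)) (div_pos (neg_pos.mpr hneg) (by positivity))
  have hmx' : (|C| + 1) * q (m - x) < -L x := by
    rwa [lt_div_iff₀ (by positivity), mul_comm] at hmx
  have hLmx : L (m - x) ≤ |C| * q (m - x) :=
    (le_abs_self _).trans ((hLq _).trans (mul_le_mul_of_nonneg_right (le_abs_self C)
      (apply_nonneg _ _)))
  have := hLM m hm
  rw [map_sub] at hLmx
  nlinarith [apply_nonneg q (m - x)]

theorem IsCompact.subset_of_extremePoints_subset {E : Type*} [AddCommGroup E] [Module ℝ E]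
    [TopologicalSpace E] [T2Space E] [IsTopologicalAddGroup E] [ContinuousSMul ℝ E]
    [LocallyConvexSpace ℝ E] {s t : Set E} (hs : IsCompact s) (hsc : Convex ℝ s)
    (ht : IsClosed t) (htc : Convex ℝ t) (h : s.extremePoints ℝ ⊆ t) : s ⊆ t := by
  rw [← closure_convexHull_extremePoints hs hsc]
  exact closure_minimal (convexHull_min h htc) ht

section StateSpace

variable {E : Type*} [AddCommGroup E] [Module ℝ E] [One E]

def stateSpace (q : Seminorm ℝ E) (M : Set E) : Set (E → ℝ) :=
  Set.range ((⇑) : (E →ₗ[ℝ] ℝ) → E → ℝ) ∩ (⋂ m ∈ M, {φ | 0 ≤ φ m}) ∩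
    Set.univ.pi (fun x => Set.Icc (-q x) (q x)) ∩ {φ | φ 1 = 1}

variable {q : Seminorm ℝ E} {M : Set E}

@[simp]
theorem coe_mem_stateSpace {L : E →ₗ[ℝ] ℝ} :
    ⇑L ∈ stateSpace q M ↔ (∀ m ∈ M, 0 ≤ L m) ∧ (∀ x, |L x| ≤ q x) ∧ L 1 = 1 := by
  simp [stateSpace, abs_le, Pi.le_def, forall_and, and_assoc]

theorem isCompact_stateSpace : IsCompact (stateSpace q M) := by
  refine ((isCompact_univ_pi fun x => isCompact_Icc).inter_left ?_).inter_right
    (isClosed_eq (continuous_apply 1) continuous_const)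
  exact (LinearMap.isClosed_range_coe E ℝ (RingHom.id ℝ)).inter <| isClosed_biInter fun m _ =>
    isClosed_le continuous_const (continuous_apply m)

theorem convex_stateSpace : Convex ℝ (stateSpace q M) := by
  refine (((?_ : Convex ℝ (Set.range _)).inter <| convex_iInter₂ fun m _ =>
    convex_halfSpace_ge (LinearMap.proj m).isLinear 0).inter <|
    convex_pi fun x _ => convex_Icc _ _).inter <| convex_hyperplane (LinearMap.proj 1).isLinear 1
  rintro _ ⟨L₁, rfl⟩ _ ⟨L₂, rfl⟩ a b - - -
  exact ⟨a • L₁ + b • L₂, rfl⟩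

end StateSpace

namespace IsPowerModule

variable {A : Type*} [CommRing A] [Algebra ℝ A] {d : ℕ} {M : Set A} {q : Seminorm ℝ A}
  {L : A →ₗ[ℝ] ℝ} {C : ℝ}

theorem smul_mem (hd : 0 < d) (hM : IsPowerModule d M) {t : ℝ} (ht : 0 ≤ t) {x : A}
    (hx : x ∈ M) : t • x ∈ M := by
  have := hM.2.2 (algebraMap ℝ A (t ^ ((2 * d : ℕ) : ℝ)⁻¹)) x hx
  rwa [← map_pow, Real.rpow_inv_natCast_pow ht (by omega), ← Algebra.smul_def] at this

theorem zero_mem (hd : 0 < d) (hM : IsPowerModule d M) : (0 : A) ∈ M := by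
  simpa using hM.smul_mem hd le_rfl hM.1

theorem convex (hd : 0 < d) (hM : IsPowerModule d M) : Convex ℝ M :=
  fun _ hx _ hy _ _ ha hb _ => hM.2.1 _ (hM.smul_mem hd ha hx) _ (hM.smul_mem hd hb hy)

theorem apply_one_add_mul_nonneg (hq : ∀ a b, q (a * b) ≤ q a * q b) (hd : 0 < d)
    (hM : IsPowerModule d M) (hLM : ∀ m ∈ M, 0 ≤ L m) (hLq : ∀ x, |L x| ≤ C * q x) {v : A}
    (hv : q v < 1) {w : A} (hw : w ∈ M) : 0 ≤ L ((1 + v) * w) := by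
  refine L.nonneg_of_forall_exists_sub_lt hLq hLM fun ε hε => ?_
  have hw1 : 0 < q w + 1 := by positivity
  obtain ⟨g, hg⟩ := Seminorm.exists_pow_sub_one_add_lt hq (by omega : 2 * d ≠ 0) hv
    (div_pos hε hw1)
  refine ⟨g ^ (2 * d) * w, hM.2.2 g w hw, ?_⟩
  calc q (g ^ (2 * d) * w - (1 + v) * w) = q ((g ^ (2 * d) - (1 + v)) * w) := by rw [sub_mul]
    _ ≤ q (g ^ (2 * d) - (1 + v)) * q w := hq _ _
    _ ≤ ε / (q w + 1) * q w := by gcongr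
    _ < ε := by
      rw [div_mul_eq_mul_div, div_lt_iff₀ hw1]
      linarith

theorem abs_apply_le (hq : ∀ a b, q (a * b) ≤ q a * q b) (hd : 0 < d) (hM : IsPowerModule d M)
    (hLM : ∀ m ∈ M, 0 ≤ L m) (hLq : ∀ x, |L x| ≤ C * q x) (x : A) : |L x| ≤ L 1 * q x := by
  have hunit : ∀ u, q u < 1 → |L u| ≤ L 1 := fun u hu => by
    have h₁ := apply_one_add_mul_nonneg hq hd hM hLM hLq hu hM.1
    have h₂ := apply_one_add_mul_nonneg hq hd hM hLM hLq (v := -u) (by rwa [map_neg_eq_map]) hM.1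
    simp only [mul_one, map_add, map_neg] at h₁ h₂
    exact abs_le.mpr ⟨by linarith, by linarith⟩
  have hscale : ∀ c > q x, |L x| ≤ L 1 * c := fun c hc => by
    have hc0 : 0 < c := (apply_nonneg q x).trans_lt hc
    have := hunit (c⁻¹ • x) (by
      rwa [map_smul_eq_mul, norm_inv, Real.norm_of_nonneg hc0.le, inv_mul_lt_iff₀ hc0, mul_one])
    rwa [map_smul, smul_eq_mul, abs_mul, abs_inv, abs_of_pos hc0, inv_mul_le_iff₀ hc0,
      mul_comm] at this
  exact ge_of_tendsto ((continuous_const.mul continuous_id).tendsto (q x) |>.mono_left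
    nhdsWithin_le_nhds) (eventually_nhdsWithin_of_forall (s := Set.Ioi (q x)) hscale)

theorem eq_zero_of_apply_one_eq_zero (hq : ∀ a b, q (a * b) ≤ q a * q b) (hd : 0 < d)
    (hM : IsPowerModule d M) (hLM : ∀ m ∈ M, 0 ≤ L m) (hLq : ∀ x, |L x| ≤ C * q x)
    (hL1 : L 1 = 0) : L = 0 :=
  LinearMap.ext fun x => abs_nonpos_iff.mp <| by simpa [hL1] using abs_apply_le hq hd hM hLM hLq x

theorem inv_smul_mem_stateSpace (hq : ∀ a b, q (a * b) ≤ q a * q b) (hd : 0 < d)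
    (hM : IsPowerModule d M) (hLM : ∀ m ∈ M, 0 ≤ L m) (hLq : ∀ x, |L x| ≤ C * q x)
    (hL1 : 0 < L 1) : ⇑((L 1)⁻¹ • L) ∈ stateSpace q M := by
  refine coe_mem_stateSpace.mpr ⟨fun m hm => ?_, fun x => ?_, ?_⟩
  · simpa using mul_nonneg (inv_nonneg.mpr hL1.le) (hLM m hm)
  · rw [LinearMap.smul_apply, smul_eq_mul, abs_mul, abs_inv, abs_of_pos hL1,
      inv_mul_le_iff₀ hL1]
    exact abs_apply_le hq hd hM hLM hLq x
  · simp [hL1.ne']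

theorem eq_smul_of_mem_extremePoints (hq : ∀ a b, q (a * b) ≤ q a * q b) (hd : 0 < d)
    (hM : IsPowerModule d M) {Φ : A →ₗ[ℝ] ℝ} (hΦ : ⇑Φ ∈ (stateSpace q M).extremePoints ℝ)
    (hLM : ∀ m ∈ M, 0 ≤ L m) (hLM' : ∀ m ∈ M, 0 ≤ (Φ - L) m) (hLq : ∀ x, |L x| ≤ C * q x) :
    L = L 1 • Φ := by
  obtain ⟨hΦM, hΦq, hΦ1⟩ := coe_mem_stateSpace.mp hΦ.1
  have hLq' : ∀ x, |(Φ - L) x| ≤ (1 + C) * q x := fun x => by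
    rw [LinearMap.sub_apply, add_mul, one_mul]
    exact (abs_sub _ _).trans (add_le_add (hΦq x) (hLq x))
  have hΦL1 : (Φ - L) 1 = 1 - L 1 := by rw [LinearMap.sub_apply, hΦ1]
  rcases (hLM 1 hM.1).eq_or_lt with hL0 | hL0
  · rw [← hL0, zero_smul]
    exact eq_zero_of_apply_one_eq_zero hq hd hM hLM hLq hL0.symm
  rcases (hLM' 1 hM.1).eq_or_lt with hL1 | hL1
  · have hΦL := eq_zero_of_apply_one_eq_zero hq hd hM hLM' hLq' hL1.symm
    rw [hΦL1, eq_comm, sub_eq_zero] at hL1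
    rw [← hL1, one_smul, ← sub_eq_zero, ← neg_sub, hΦL, neg_zero]
  have h₁ := inv_smul_mem_stateSpace hq hd hM hLM hLq hL0
  have h₂ := inv_smul_mem_stateSpace hq hd hM hLM' hLq' hL1
  have hseg : ⇑Φ ∈ openSegment ℝ ⇑((L 1)⁻¹ • L) ⇑(((Φ - L) 1)⁻¹ • (Φ - L)) := by
    refine ⟨L 1, (Φ - L) 1, hL0, hL1, by rw [hΦL1, add_sub_cancel], ?_⟩
    ext x
    simp only [Pi.add_apply, Pi.smul_apply, LinearMap.smul_apply, smul_eq_mul]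
    rw [mul_inv_cancel_left₀ hL0.ne', mul_inv_cancel_left₀ hL1.ne', LinearMap.sub_apply,
      add_sub_cancel]
  ext x
  have hx := congrFun (hΦ.2 h₁ h₂ hseg) x
  simp only [LinearMap.smul_apply, smul_eq_mul] at hx ⊢
  rw [← hx, mul_inv_cancel_left₀ hL0.ne']

theorem apply_mul_eq_of_mem_extremePoints (hq : ∀ a b, q (a * b) ≤ q a * q b) (hd : 0 < d)
    (hM : IsPowerModule d M) {Φ : A →ₗ[ℝ] ℝ} (hΦ : ⇑Φ ∈ (stateSpace q M).extremePoints ℝ)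
    {s : A} (hs : ∀ m ∈ M, s * m ∈ M) (x : A) : Φ (s * x) = Φ s * Φ x := by
  obtain ⟨hΦM, hΦq, -⟩ := coe_mem_stateSpace.mp hΦ.1
  set t := (q s + 1)⁻¹
  have ht : 0 < t := by positivity
  have hts : q (t • s) < 1 := by
    rw [map_smul_eq_mul, Real.norm_of_nonneg ht.le, inv_mul_lt_iff₀ (by positivity), mul_one]
    exact lt_add_one _
  have hL := eq_smul_of_mem_extremePoints hq hd hM hΦ (L := Φ ∘ₗ LinearMap.mulLeft ℝ (t • s))
    (fun m hm => by simpa [smul_mul_assoc] using hΦM _ (hM.smul_mem hd ht.le (hs m hm)))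
    (fun m hm => by
      simpa [add_mul, sub_eq_add_neg] using apply_one_add_mul_nonneg hq hd hM hΦM
        (C := 1) (by simpa using hΦq) (v := -(t • s)) (by rwa [map_neg_eq_map]) hm)
    (C := q (t • s)) fun y => (hΦq _).trans (hq _ _)
  have := LinearMap.congr_fun hL x
  simp only [LinearMap.comp_apply, LinearMap.mulLeft_apply, smul_mul_assoc, map_smul,
    mul_one, LinearMap.smul_apply, smul_eq_mul] at this
  exact mul_left_cancel₀ ht.ne' (by rw [this, mul_assoc])

theorem map_mul_of_mem_extremePoints (hq : ∀ a b, q (a * b) ≤ q a * q b) (hd : 0 < d)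
    (hM : IsPowerModule d M) {Φ : A →ₗ[ℝ] ℝ} (hΦ : ⇑Φ ∈ (stateSpace q M).extremePoints ℝ)
    (x y : A) : Φ (x * y) = Φ x * Φ y := by
  have hD : Φ ∘ₗ LinearMap.mulRight ℝ y - Φ y • Φ = 0 :=
    LinearMap.eq_zero_of_forall_map_pow_eq_zero (n := 2 * d) (by omega) fun c => by
      rw [LinearMap.sub_apply, LinearMap.comp_apply, LinearMap.mulRight_apply,
        LinearMap.smul_apply, smul_eq_mul, apply_mul_eq_of_mem_extremePoints hq hd hM hΦ
        (hM.2.2 c) y, mul_comm, sub_self]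
  simpa [sub_eq_zero, mul_comm] using LinearMap.congr_fun hD x

theorem exists_algHom_of_apply_neg (hq : ∀ a b, q (a * b) ≤ q a * q b) (hd : 0 < d)
    (hM : IsPowerModule d M) (hLM : ∀ m ∈ M, 0 ≤ L m) (hLq : ∀ x, |L x| ≤ C * q x) {a : A}
    (ha : L a < 0) : ∃ β : A →ₐ[ℝ] ℝ, (∀ m ∈ M, 0 ≤ β m) ∧ (∀ x, |β x| ≤ q x) ∧ β a < 0 := by
  have hL1 : 0 < L 1 := (hLM 1 hM.1).lt_of_ne fun h => ha.ne <| by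
    rw [eq_zero_of_apply_one_eq_zero hq hd hM hLM hLq h.symm, LinearMap.zero_apply]
  obtain ⟨φ, hφ, hφa⟩ : ∃ φ ∈ (stateSpace q M).extremePoints ℝ, φ a < 0 := by
    by_contra! h
    have := isCompact_stateSpace.subset_of_extremePoints_subset convex_stateSpace
      (isClosed_le continuous_const (continuous_apply a))
      (convex_halfSpace_ge (LinearMap.proj a).isLinear 0) h
      (inv_smul_mem_stateSpace hq hd hM hLM hLq hL1)
    exact (mul_neg_of_pos_of_neg (inv_pos.mpr hL1) ha).not_ge this
  obtain ⟨Φ, rfl⟩ := hφ.1.1.1.1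
  obtain ⟨hΦM, hΦq, hΦ1⟩ := coe_mem_stateSpace.mp hφ.1
  exact ⟨AlgHom.ofLinearMap Φ hΦ1 (map_mul_of_mem_extremePoints hq hd hM hφ), hΦM, hΦq, hφa⟩

theorem exists_continuousLinearMap_of_notMem_closure [TopologicalSpace A]
    [IsTopologicalAddGroup A] [ContinuousSMul ℝ A] [LocallyConvexSpace ℝ A] (hd : 0 < d)
    (hM : IsPowerModule d M) {a : A} (ha : a ∉ closure M) :
    ∃ f : A →L[ℝ] ℝ, (∀ m ∈ M, 0 ≤ f m) ∧ f a < 0 := by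
  obtain ⟨f, u, hfa, hfM⟩ :=
    geometric_hahn_banach_point_closed (hM.convex hd).closure isClosed_closure ha
  have hu : u < 0 := by simpa using hfM 0 (subset_closure (hM.zero_mem hd))
  refine ⟨f, fun m hm => ?_, hfa.trans hu⟩
  by_contra! hfm
  have := hfM _ (subset_closure (hM.smul_mem hd (div_nonneg_of_nonpos hu.le hfm.le) hm))
  rw [map_smul, smul_eq_mul, div_mul_cancel₀ _ hfm.ne] at this
  exact this.false

end IsPowerModule

/-- **Closure theorem for locally multiplicatively convex `ℝ`-algebras.** Let `τ` be the
locally multiplicatively convex topology on `A` generated by a family of submultiplicative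
seminorms and let `M` be a `2d`-power module of `A`. Then the `τ`-closure of `M` equals
`Pos(X_M ∩ sp(τ))`, the set of elements whose Gelfand transform is non-negative on all
`τ`-continuous characters which are non-negative on `M`. -/
theorem closure_powerModule_eq_pos_lmc (A : Type*) [CommRing A] [Algebra ℝ A]
    {ι : Type*} [Nonempty ι] (p : ι → Seminorm ℝ A)
    (hsub : ∀ i : ι, ∀ a b : A, p i (a * b) ≤ p i a * p i b)
    (d : ℕ) (hd : 0 < d) (M : Set A) (hM : IsPowerModule d M) :
    @closure A (seminormFamilyTopology p) M =
      {a : A | ∀ α : A →ₐ[ℝ] ℝ,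
        (∀ m ∈ M, 0 ≤ α m) →
          @Continuous A ℝ (seminormFamilyTopology p) inferInstance ⇑α → 0 ≤ α a} := by
  let := seminormFamilyTopology p
  have hp : WithSeminorms p := ⟨rfl⟩
  have := hp.topologicalAddGroup
  have := hp.continuousSMul
  have := hp.toLocallyConvexSpace
  refine subset_antisymm (fun a ha α hαM hαc => ?_) fun a ha => ?_
  · exact closure_minimal hαM (isClosed_le continuous_const hαc) ha
  by_contra hna
  obtain ⟨f, hfM, hfa⟩ := hM.exists_continuousLinearMap_of_notMem_closure hd hna
  obtain ⟨s, C, -, hC⟩ := Seminorm.bound_of_continuous hp ((normSeminorm ℝ ℝ).comp f.toLinearMap)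
    (continuous_norm.comp f.continuous)
  obtain ⟨β, hβM, hβq, hβa⟩ := hM.exists_algHom_of_apply_neg
    (Seminorm.finset_sup_apply_mul_le hsub s) hd (L := f.toLinearMap) hfM (fun x => hC x) hfa
  have hβ : Continuous β := hp.continuous_real_rng β.toLinearMap
    ⟨s, 1, fun x => by simpa using (le_abs_self _).trans (hβq x)⟩
  exact hβa.not_ge (ha β hβM hβ)
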